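/- Let P, P' : ℝ → Prop be time-indexed predicates and let t, a, τ, b ∈ ℝ with 0 ≤ a ≤ τ < b. Then (∃ t' ∈ [t+a, t+b), P' t' ∧ ∀ s ∈ [t, t'], P s) if and only if [∃ t' ∈ [t+a, t+τ), P' t' ∧ ∀ s ∈ [t, t'], P s] ∨ [(∀ s ∈ [t, t+τ), P s) ∧ ((P (t+τ) ∧ P' (t+τ)) ∨ (∃ t' ∈ (t+τ, t+b), P' t' ∧ ∀ s ∈ [t, t'], P s))]. -/

import Mathlib

/-! Split the witness `t'` of the left-hand side according to whether `t' < t + τ`, `t' = t + τ`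
or `t' > t + τ`. A witness at or beyond `t + τ` forces `P` on all of `[t, t + τ)`, and a witness
exactly at `t + τ` is the same as `P` on `[t, t + τ)` together with `P (t + τ) ∧ P' (t + τ)`. -/

namespace Set

variable {α : Type*} [LinearOrder α]

theorem exists_mem_Ico_iff_of_mem_Ico {lo m hi : α} (hm : m ∈ Ico lo hi) (Q : α → Prop) :
    (∃ x ∈ Ico lo hi, Q x) ↔ (∃ x ∈ Ico lo m, Q x) ∨ Q m ∨ ∃ x ∈ Ioo m hi, Q x := by
  rw [← Ico_union_Ico_eq_Ico hm.1 hm.2.le, ← Ioo_insert_left hm.2]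
  simp only [mem_union, or_and_right, exists_or, exists_mem_insert]

theorem forall_mem_Icc_iff_forall_mem_Ico_and {a b : α} (hab : a ≤ b) (P : α → Prop) :
    (∀ s ∈ Icc a b, P s) ↔ (∀ s ∈ Ico a b, P s) ∧ P b := by
  rw [← Ico_insert_right hab, forall_mem_insert, and_comm]

theorem forall_mem_Ico_of_forall_mem_Icc {a b c : α} (hbc : b ≤ c) {P : α → Prop}
    (h : ∀ s ∈ Icc a c, P s) : ∀ s ∈ Ico a b, P s :=
  fun s hs => h s (Ico_subset_Icc_self.trans (Icc_subset_Icc_right hbc) hs)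

end Set

open Set in
/-- Proposition 1 variant: syntactic separation of until at time τ for [a,b). -/
theorem until_separation_Ico (P P' : ℝ → Prop) (t a τ b : ℝ)
    (h0a : 0 ≤ a) (haτ : a ≤ τ) (hτb : τ < b) :
    (∃ t' ∈ Set.Ico (t + a) (t + b), P' t' ∧ ∀ s ∈ Set.Icc t t', P s) ↔
      ((∃ t' ∈ Set.Ico (t + a) (t + τ), P' t' ∧ ∀ s ∈ Set.Icc t t', P s) ∨
        ((∀ s ∈ Set.Ico t (t + τ), P s) ∧
          ((P (t + τ) ∧ P' (t + τ)) ∨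
            (∃ t' ∈ Set.Ioo (t + τ) (t + b), P' t' ∧ ∀ s ∈ Set.Icc t t', P s)))) := by
  have hsplit : t + τ ∈ Ico (t + a) (t + b) := ⟨by linarith, by linarith⟩
  have hτ : t ≤ t + τ := by linarith
  have hlate : (∃ t' ∈ Ioo (t + τ) (t + b), P' t' ∧ ∀ s ∈ Icc t t', P s) →
      ∀ s ∈ Ico t (t + τ), P s :=
    fun ⟨_, ht', _, hP⟩ => forall_mem_Ico_of_forall_mem_Icc ht'.1.le hP
  rw [exists_mem_Ico_iff_of_mem_Ico hsplit, forall_mem_Icc_iff_forall_mem_Ico_and hτ]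
  refine or_congr_right ⟨?_, ?_⟩
  · rintro (⟨hP'τ, hbefore, hPτ⟩ | hwitness)
    · exact ⟨hbefore, .inl ⟨hPτ, hP'τ⟩⟩
    · exact ⟨hlate hwitness, .inr hwitness⟩
  · rintro ⟨hbefore, ⟨hPτ, hP'τ⟩ | hwitness⟩
    · exact .inl ⟨hP'τ, hbefore, hPτ⟩
    · exact .inr hwitness
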